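/- arXiv:2102.05780 — 3 statements merged into one kernel-verified Lean document; each statement's English description precedes it below -/
import Mathlib

section
/- Let H be a complex Hilbert space with dim H ≥ 4, fix π/4 < α < π/2 and set a := cos α. Let c ≥ d > 0 with c² + d² = 1, let λ₁, λ₂, λ₃ be pairwise different complex numbers of modulus 1, let {e₁, e₂} ⊆ H be an orthonormal system, and set S₀ := {[c·e₁ + λ_j·d·e₂] : j = 1, 2, 3}. Then the double-α-set satisfies S₀^⟨⟨α⟩⟩ = {[c·e₁ + λ·d·e₂] : λ ∈ ℂ, |λ| = 1}. -/
/-!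
If a line `[y]` makes the angle `α` with the three points `[c e₁ + λⱼ d e₂]`, the complex numbers
`c ⟪y, e₁⟫ + λⱼ d ⟪y, e₂⟫` have equal modulus for three distinct `λⱼ` on the unit circle, which
forces one of the two summands to vanish; so `[y]` makes the angle `α` with every point of the
circle.

Conversely, since `cos α < √2 / 2 ≤ c`, the line of `(cos α · μ) e₁ + √(c² - cos² α) w` lies in the
α-set of the triple for every unit `μ` and every unit `w ⊥ e₁, e₂`. Testing a line `[u]` of the
double α-set against these with `w ⊥ u` (possible as `dim H ≥ 4`) gives `|⟪e₁, u⟫| = c ‖u‖`;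
testing with `w` along the component of `u` orthogonal to `e₁, e₂` and `μ` the phase of `⟪e₁, u⟫`
shows that this component vanishes. Then `|⟪e₂, u⟫| = d ‖u‖`, i.e. `[u]` lies on the circle.
-/

noncomputable section

variable {H : Type*} [NormedAddCommGroup H] [InnerProductSpace ℂ H]

/-- The quantum angle (Fubini–Study distance) between two lines,
computed from unit representatives. -/
def qAngle (x y : Projectivization ℂ H) : ℝ :=
  Real.arccos (‖(inner ℂ x.rep y.rep : ℂ)‖ / (‖x.rep‖ * ‖y.rep‖))

/-- The α-set of a set of lines. -/
def alphaSet (α : ℝ) (S : Set (Projectivization ℂ H)) : Set (Projectivization ℂ H) :=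
  {x | ∀ y ∈ S, qAngle x y = α}

/-- φ is a Wigner symmetry: it is induced by a unitary or an antiunitary operator. -/
def IsWignerSymmetry (φ : Projectivization ℂ H → Projectivization ℂ H) : Prop :=
  ∃ U : H → H,
    ((∃ e : H ≃ₗᵢ[ℂ] H, U = ⇑e) ∨ (∃ e : H ≃ₗᵢ⋆[ℂ] H, U = ⇑e)) ∧
    ∀ (v : H) (hv : v ≠ 0),
      (φ (Projectivization.mk ℂ v hv)).submodule = Submodule.span ℂ {U v}

/-- The circle determined by an orthonormal pair and coefficients c, d. -/
def circleSet (e₁ e₂ : H) (c d : ℝ) : Set (Projectivization ℂ H) :=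
  {x | ∃ lam : ℂ, ‖lam‖ = 1 ∧
    x.submodule = Submodule.span ℂ {(c : ℂ) • e₁ + (lam * d) • e₂}}

/-- A circle in the projective space. -/
def IsCircle (T : Set (Projectivization ℂ H)) : Prop :=
  ∃ (e₁ e₂ : H) (c d : ℝ), ‖e₁‖ = 1 ∧ ‖e₂‖ = 1 ∧ (inner ℂ e₁ e₂ : ℂ) = 0 ∧
    0 < c ∧ 0 < d ∧ c ^ 2 + d ^ 2 = 1 ∧ T = circleSet e₁ e₂ c d

/-- A highly-α-symmetric set. -/
def IsHighlyAlphaSymmetric (α : ℝ) (T : Set (Projectivization ℂ H)) : Prop :=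
  T.Infinite ∧ (alphaSet α T).Infinite ∧
    ∀ S : Set (Projectivization ℂ H), S ⊆ T → S.ncard = 3 →
      alphaSet α (alphaSet α S) = T

open scoped ComplexConjugate InnerProductSpace

namespace Complex

lemma eq_or_eq_conj_of_re_eq_of_norm_eq {z w : ℂ} (hre : z.re = w.re) (hn : ‖z‖ = ‖w‖) :
    z = w ∨ z = conj w := by
  have him : z.im ^ 2 = w.im ^ 2 := by
    have := congrArg (· ^ 2) hn
    simp only [Complex.sq_norm, normSq_apply, hre] at this
    nlinarith
  rcases sq_eq_sq_iff_eq_or_eq_neg.mp him with h | h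
  · exact .inl (ext hre h)
  · exact .inr (ext hre (by simpa using h))

lemma eq_zero_of_re_mul_eq {l : Fin 3 → ℂ} (hl : ∀ j, ‖l j‖ = 1) (hinj : Function.Injective l)
    {m : ℂ} (hre : ∀ j, (l j * m).re = (l 0 * m).re) : m = 0 := by
  by_contra hm
  have hζ : Function.Injective fun j => l j * m := (mul_left_injective₀ hm).comp hinj
  have hcases (j : Fin 3) : l j * m = l 0 * m ∨ l j * m = conj (l 0 * m) :=
    eq_or_eq_conj_of_re_eq_of_norm_eq (hre j) (by simp [hl])
  have h1 := (hcases 1).resolve_left (hζ.ne (by decide))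
  have h2 := (hcases 2).resolve_left (hζ.ne (by decide))
  exact hζ.ne (show (1 : Fin 3) ≠ 2 by decide) (h1.trans h2.symm)

lemma eq_zero_or_eq_zero_of_norm_add_mul_eq {l : Fin 3 → ℂ} (hl : ∀ j, ‖l j‖ = 1)
    (hinj : Function.Injective l) {w z : ℂ} {ρ : ℝ} (h : ∀ j, ‖w + l j * z‖ = ρ) :
    w = 0 ∨ z = 0 := by
  have hsq (j : Fin 3) :
      normSq (w + l j * z) = normSq z + normSq w + 2 * (l j * (z * conj w)).re := by
    rw [add_comm, normSq_add, normSq_mul, normSq_eq_norm_sq (l j), hl, mul_assoc]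
    ring
  have hre (j : Fin 3) : (l j * (z * conj w)).re = (l 0 * (z * conj w)).re := by
    have : normSq (w + l j * z) = normSq (w + l 0 * z) := by
      rw [normSq_eq_norm_sq, normSq_eq_norm_sq, h j, h 0]
    linarith [hsq j, hsq 0]
  rcases mul_eq_zero.mp (eq_zero_of_re_mul_eq hl hinj hre) with hz | hw
  · exact .inr hz
  · exact .inl (by simpa using hw)

end Complex

lemma cos_lt_of_pi_div_four_lt {α c : ℝ} (hα : Real.pi / 4 < α) (hαπ : α ≤ Real.pi) (hc : 0 < c)
    (hc2 : 1 / 2 ≤ c ^ 2) : Real.cos α < c := by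
  have h := Real.cos_lt_cos_of_nonneg_of_le_pi (by positivity) hαπ hα
  rw [Real.cos_pi_div_four] at h
  nlinarith [Real.sq_sqrt (show (0 : ℝ) ≤ 2 by norm_num), Real.sqrt_nonneg 2]

lemma exists_smul_eq_rep_of_submodule_eq {x : Projectivization ℂ H} {u : H}
    (hx : x.submodule = ℂ ∙ u) : ∃ k : ℂ, k ≠ 0 ∧ x.rep = k • u := by
  have hmem : x.rep ∈ ℂ ∙ u := hx ▸ x.submodule_eq ▸ Submodule.mem_span_singleton_self _
  obtain ⟨k, hk⟩ := Submodule.mem_span_singleton.mp hmem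
  refine ⟨k, ?_, hk.symm⟩
  rintro rfl
  exact x.rep_nonzero (by simpa using hk.symm)

lemma ne_zero_of_submodule_eq {x : Projectivization ℂ H} {u : H} (hx : x.submodule = ℂ ∙ u) :
    u ≠ 0 := by
  obtain ⟨k, -, hk⟩ := exists_smul_eq_rep_of_submodule_eq hx
  rintro rfl
  exact x.rep_nonzero (by simpa using hk)

lemma qAngle_eq_arccos {x y : Projectivization ℂ H} {u v : H} (hx : x.submodule = ℂ ∙ u)
    (hy : y.submodule = ℂ ∙ v) :
    qAngle x y = Real.arccos (‖⟪u, v⟫_ℂ‖ / (‖u‖ * ‖v‖)) := by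
  obtain ⟨k, hk, hku⟩ := exists_smul_eq_rep_of_submodule_eq hx
  obtain ⟨k', hk', hkv⟩ := exists_smul_eq_rep_of_submodule_eq hy
  have hkk' : ‖k‖ * ‖k'‖ ≠ 0 := by positivity
  rw [qAngle, hku, hkv, inner_smul_left, inner_smul_right, norm_mul, norm_mul, RCLike.norm_conj,
    norm_smul, norm_smul, ← mul_assoc, mul_mul_mul_comm, mul_div_mul_left _ _ hkk']

lemma qAngle_eq_iff {α : ℝ} (hα₀ : 0 ≤ α) (hαπ : α ≤ Real.pi) {x y : Projectivization ℂ H}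
    {u v : H} (hx : x.submodule = ℂ ∙ u) (hy : y.submodule = ℂ ∙ v) :
    qAngle x y = α ↔ ‖⟪u, v⟫_ℂ‖ = Real.cos α * (‖u‖ * ‖v‖) := by
  have huv : 0 < ‖u‖ * ‖v‖ := by
    have := ne_zero_of_submodule_eq hx
    have := ne_zero_of_submodule_eq hy
    positivity
  have hle : ‖⟪u, v⟫_ℂ‖ / (‖u‖ * ‖v‖) ≤ 1 := (div_le_one huv).mpr (norm_inner_le_norm u v)
  have hge : -1 ≤ ‖⟪u, v⟫_ℂ‖ / (‖u‖ * ‖v‖) := by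
    linarith [div_nonneg (norm_nonneg ⟪u, v⟫_ℂ) huv.le]
  rw [qAngle_eq_arccos hx hy, ← div_eq_iff huv.ne']
  constructor
  · rintro rfl
    exact (Real.cos_arccos hge hle).symm
  · intro h
    rw [h, Real.arccos_cos hα₀ hαπ]

lemma mem_alphaSet_iff {α : ℝ} (hα₀ : 0 ≤ α) (hαπ : α ≤ Real.pi) {ι : Type*} {u : ι → H}
    (hu : ∀ j, ‖u j‖ = 1) {z : Projectivization ℂ H} {v : H} (hz : z.submodule = ℂ ∙ v) :
    z ∈ alphaSet α {x | ∃ j, x.submodule = ℂ ∙ u j} ↔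
      ∀ j, ‖⟪v, u j⟫_ℂ‖ = Real.cos α * ‖v‖ := by
  have hu₀ (j : ι) : u j ≠ 0 := fun h => by simpa [h] using hu j
  constructor
  · intro h j
    simpa [hu] using (qAngle_eq_iff hα₀ hαπ hz (Projectivization.submodule_mk _ (hu₀ j))).mp
      (h _ ⟨j, Projectivization.submodule_mk _ (hu₀ j)⟩)
  · rintro h y ⟨j, hy⟩
    rw [qAngle_eq_iff hα₀ hαπ hz hy, h j, hu j, mul_one]

lemma exists_norm_eq_one_forall_inner_eq_zero {𝕜 E : Type*} [RCLike 𝕜] [NormedAddCommGroup E]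
    [InnerProductSpace 𝕜 E] (s : Finset E) (hs : s.card < Module.rank 𝕜 E) :
    ∃ w : E, ‖w‖ = 1 ∧ ∀ x ∈ s, ⟪x, w⟫_𝕜 = 0 := by
  set K := Submodule.span 𝕜 (s : Set E)
  have : FiniteDimensional 𝕜 K := FiniteDimensional.span_finset 𝕜 s
  have hK : Kᗮ ≠ ⊥ := by
    intro h
    have hrank : Module.rank 𝕜 E ≤ s.card := by
      rw [← rank_top 𝕜 E, ← Submodule.orthogonal_eq_bot_iff.mp h]
      exact rank_span_finset_le s
    exact (hs.trans_le hrank).false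
  obtain ⟨w, hwK, hw⟩ := Submodule.exists_mem_ne_zero_of_ne_bot hK
  refine ⟨(‖w‖⁻¹ : 𝕜) • w, by simp [norm_smul, hw], fun x hx => ?_⟩
  rw [inner_smul_right, Submodule.inner_right_of_mem_orthogonal (Submodule.subset_span hx) hwK,
    mul_zero]

section Circle

variable {e₁ e₂ : H} {c d : ℝ}

lemma norm_smul_add_smul_sq (he₁ : ‖e₁‖ = 1) (he₂ : ‖e₂‖ = 1) (he₁₂ : ⟪e₁, e₂⟫_ℂ = 0)
    (p q : ℂ) : ‖p • e₁ + q • e₂‖ ^ 2 = ‖p‖ ^ 2 + ‖q‖ ^ 2 := by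
  have h := norm_add_sq_eq_norm_sq_add_norm_sq_of_inner_eq_zero (𝕜 := ℂ) (p • e₁) (q • e₂)
    (by rw [inner_smul_left, inner_smul_right, he₁₂, mul_zero, mul_zero])
  simp only [norm_smul, he₁, he₂, mul_one] at h
  rw [sq, h, sq, sq]

lemma norm_smul_add_smul_eq_one (he₁ : ‖e₁‖ = 1) (he₂ : ‖e₂‖ = 1) (he₁₂ : ⟪e₁, e₂⟫_ℂ = 0)
    (hcd : c ^ 2 + d ^ 2 = 1) {lam : ℂ} (hlam : ‖lam‖ = 1) :
    ‖(c : ℂ) • e₁ + (lam * d) • e₂‖ = 1 := by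
  rw [← pow_left_inj₀ (norm_nonneg _) zero_le_one two_ne_zero,
    norm_smul_add_smul_sq he₁ he₂ he₁₂, norm_mul, hlam, one_mul, Complex.norm_real,
    Complex.norm_real, Real.norm_eq_abs, Real.norm_eq_abs, sq_abs, sq_abs, hcd, one_pow]

lemma inner_smul_add_smul_right (x : H) (lam : ℂ) :
    ⟪x, (c : ℂ) • e₁ + (lam * d) • e₂⟫_ℂ = c * ⟪x, e₁⟫_ℂ + lam * (d * ⟪x, e₂⟫_ℂ) := by
  simp only [inner_add_right, inner_smul_right]
  ring

lemma norm_inner_smul_add_smul_of_mem_alphaSet {α : ℝ} (hα₀ : 0 ≤ α) (hαπ : α ≤ Real.pi)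
    (he₁ : ‖e₁‖ = 1) (he₂ : ‖e₂‖ = 1) (he₁₂ : ⟪e₁, e₂⟫_ℂ = 0) (hcd : c ^ 2 + d ^ 2 = 1)
    {lam : Fin 3 → ℂ} (hlam : ∀ j, ‖lam j‖ = 1) (hinj : Function.Injective lam)
    {y : Projectivization ℂ H}
    (hy : y ∈ alphaSet α {x | ∃ j, x.submodule = ℂ ∙ ((c : ℂ) • e₁ + (lam j * d) • e₂)})
    {μ : ℂ} (hμ : ‖μ‖ = 1) :
    ‖⟪y.rep, (c : ℂ) • e₁ + (μ * d) • e₂⟫_ℂ‖ = Real.cos α * ‖y.rep‖ := by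
  have hA := (mem_alphaSet_iff hα₀ hαπ (fun j => norm_smul_add_smul_eq_one he₁ he₂ he₁₂ hcd
    (hlam j)) y.submodule_eq).mp hy
  simp only [inner_smul_add_smul_right] at hA ⊢
  have h0 := hA 0
  rcases Complex.eq_zero_or_eq_zero_of_norm_add_mul_eq hlam hinj hA with h | h
  · rw [h, zero_add, norm_mul, hμ, one_mul]
    rwa [h, zero_add, norm_mul, hlam, one_mul] at h0
  · rwa [h, mul_zero, add_zero] at h0 ⊢

lemma circleSet_subset_alphaSet_alphaSet {α : ℝ} (hα₀ : 0 ≤ α) (hαπ : α ≤ Real.pi)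
    (he₁ : ‖e₁‖ = 1) (he₂ : ‖e₂‖ = 1) (he₁₂ : ⟪e₁, e₂⟫_ℂ = 0) (hcd : c ^ 2 + d ^ 2 = 1)
    {lam : Fin 3 → ℂ} (hlam : ∀ j, ‖lam j‖ = 1) (hinj : Function.Injective lam) :
    circleSet e₁ e₂ c d ⊆
      alphaSet α (alphaSet α {x | ∃ j, x.submodule = ℂ ∙ ((c : ℂ) • e₁ + (lam j * d) • e₂)}) := by
  rintro z ⟨μ, hμ, hz⟩ y hy
  rw [qAngle_eq_iff hα₀ hαπ hz y.submodule_eq, norm_inner_symm,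
    norm_smul_add_smul_eq_one he₁ he₂ he₁₂ hcd hμ, one_mul]
  exact norm_inner_smul_add_smul_of_mem_alphaSet hα₀ hαπ he₁ he₂ he₁₂ hcd hlam hinj hy hμ

lemma mem_alphaSet_of_inner_eq_zero {α : ℝ} (hα₀ : 0 ≤ α) (hαπ : α ≤ Real.pi)
    (he₁ : ‖e₁‖ = 1) (he₂ : ‖e₂‖ = 1) (he₁₂ : ⟪e₁, e₂⟫_ℂ = 0) (hcd : c ^ 2 + d ^ 2 = 1)
    {ι : Type*} {lam : ι → ℂ} (hlam : ∀ j, ‖lam j‖ = 1) {x : Projectivization ℂ H} {v : H}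
    (hx : x.submodule = ℂ ∙ v) (hv₂ : ⟪v, e₂⟫_ℂ = 0)
    (hv₁ : ‖(c : ℂ) * ⟪v, e₁⟫_ℂ‖ = Real.cos α * ‖v‖) :
    x ∈ alphaSet α {x | ∃ j, x.submodule = ℂ ∙ ((c : ℂ) • e₁ + (lam j * d) • e₂)} :=
  (mem_alphaSet_iff hα₀ hαπ (fun j => norm_smul_add_smul_eq_one he₁ he₂ he₁₂ hcd (hlam j)) hx).mpr
    fun j => by rwa [inner_smul_add_smul_right, hv₂, mul_zero, mul_zero, add_zero]

lemma norm_inner_rep_of_mem_alphaSet_alphaSet {α : ℝ} (hα₀ : 0 ≤ α) (hαπ : α ≤ Real.pi)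
    (ha₀ : 0 < Real.cos α) (hac : Real.cos α ≤ c)
    (he₁ : ‖e₁‖ = 1) (he₂ : ‖e₂‖ = 1) (he₁₂ : ⟪e₁, e₂⟫_ℂ = 0) (hcd : c ^ 2 + d ^ 2 = 1)
    {ι : Type*} {lam : ι → ℂ} (hlam : ∀ j, ‖lam j‖ = 1) {z : Projectivization ℂ H}
    (hz : z ∈ alphaSet α
      (alphaSet α {x | ∃ j, x.submodule = ℂ ∙ ((c : ℂ) • e₁ + (lam j * d) • e₂)}))
    {w : H} (hw : ‖w‖ = 1) (hw₁ : ⟪e₁, w⟫_ℂ = 0) (hw₂ : ⟪e₂, w⟫_ℂ = 0) {μ : ℂ} (hμ : ‖μ‖ = 1) :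
    ‖Real.cos α * conj μ * ⟪e₁, z.rep⟫_ℂ + √(c ^ 2 - Real.cos α ^ 2) * ⟪w, z.rep⟫_ℂ‖ =
      Real.cos α * c * ‖z.rep‖ := by
  set a := Real.cos α
  set t := √(c ^ 2 - a ^ 2)
  set v : H := ((a : ℂ) * μ) • e₁ + (t : ℂ) • w
  have ht : t ^ 2 = c ^ 2 - a ^ 2 := Real.sq_sqrt (by nlinarith)
  have hv : ‖v‖ = c := by
    rw [← pow_left_inj₀ (norm_nonneg _) (ha₀.le.trans hac) two_ne_zero,
      norm_smul_add_smul_sq he₁ hw hw₁, norm_mul, hμ, Complex.norm_real, Complex.norm_real,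
      Real.norm_eq_abs, Real.norm_eq_abs, mul_one, sq_abs, sq_abs, ht]
    ring
  have hv₀ : v ≠ 0 := fun h => by simp [h] at hv; linarith
  have hv₁ : ⟪v, e₁⟫_ℂ = a * conj μ := by simp [v, inner_eq_zero_symm.mp hw₁, he₁]
  have hv₂ : ⟪v, e₂⟫_ℂ = 0 := by simp [v, he₁₂, inner_eq_zero_symm.mp hw₂]
  have hvA := mem_alphaSet_of_inner_eq_zero hα₀ hαπ he₁ he₂ he₁₂ hcd hlam
    (Projectivization.submodule_mk v hv₀) hv₂ (by
      rw [hv₁, norm_mul, norm_mul, Complex.norm_real, Complex.norm_real, RCLike.norm_conj, hμ, hv,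
        Real.norm_of_nonneg ha₀.le, Real.norm_of_nonneg (ha₀.le.trans hac)]
      ring)
  have h := (qAngle_eq_iff hα₀ hαπ z.submodule_eq (Projectivization.submodule_mk v hv₀)).mp
    (hz _ hvA)
  rw [norm_inner_symm, hv] at h
  rw [show a * c * ‖z.rep‖ = a * (‖z.rep‖ * c) by ring, ← h]
  simp only [v, inner_add_left, inner_smul_left, map_mul, Complex.conj_ofReal]

lemma eq_inner_smul_add_inner_smul_of_forall (he₁ : ‖e₁‖ = 1) (he₂ : ‖e₂‖ = 1)
    (he₁₂ : ⟪e₁, e₂⟫_ℂ = 0) {u : H} {A t : ℝ} (ht : 0 < t)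
    (h : ∀ w : H, ‖w‖ = 1 → ⟪e₁, w⟫_ℂ = 0 → ⟪e₂, w⟫_ℂ = 0 → ‖(A : ℂ) + t * ⟪w, u⟫_ℂ‖ = A) :
    u = ⟪e₁, u⟫_ℂ • e₁ + ⟪e₂, u⟫_ℂ • e₂ := by
  set r := u - (⟪e₁, u⟫_ℂ • e₁ + ⟪e₂, u⟫_ℂ • e₂)
  have hr₁ : ⟪e₁, r⟫_ℂ = 0 := by simp [r, he₁₂, he₁]
  have hr₂ : ⟪e₂, r⟫_ℂ = 0 := by simp [r, inner_eq_zero_symm.mp he₁₂, he₂]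
  have hru : ⟪r, u⟫_ℂ = (‖r‖ : ℂ) ^ 2 := by
    rw [show u = r + (⟪e₁, u⟫_ℂ • e₁ + ⟪e₂, u⟫_ℂ • e₂) by simp [r], inner_add_right,
      inner_add_right, inner_smul_right, inner_smul_right, inner_eq_zero_symm.mp hr₁,
      inner_eq_zero_symm.mp hr₂, inner_self_eq_norm_sq_to_K]
    simp
  by_contra hu
  have hr : 0 < ‖r‖ := norm_pos_iff.mpr (sub_ne_zero.mpr hu)
  have hw := h ((‖r‖⁻¹ : ℂ) • r) (by simp [norm_smul, hr.ne'])
    (by rw [inner_smul_right, hr₁, mul_zero]) (by rw [inner_smul_right, hr₂, mul_zero])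
  rw [inner_smul_left, hru, map_inv₀, Complex.conj_ofReal, sq, inv_mul_cancel_left₀
    (by exact_mod_cast hr.ne'), ← Complex.ofReal_mul, ← Complex.ofReal_add,
    Complex.norm_real, Real.norm_eq_abs] at hw
  linarith [le_abs_self (A + t * ‖r‖), mul_pos ht hr]

lemma mem_circleSet_of_submodule_eq (hc : 0 < c) (hd : 0 < d) {p q : ℂ} (hp : p ≠ 0)
    (hpq : c * ‖q‖ = d * ‖p‖) {z : Projectivization ℂ H}
    (hz : z.submodule = ℂ ∙ (p • e₁ + q • e₂)) : z ∈ circleSet e₁ e₂ c d := by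
  have hc' : (c : ℂ) ≠ 0 := by exact_mod_cast hc.ne'
  have hd' : (d : ℂ) ≠ 0 := by exact_mod_cast hd.ne'
  refine ⟨c * q / (d * p), ?_, ?_⟩
  · rw [norm_div, norm_mul, norm_mul, Complex.norm_real, Complex.norm_real, Real.norm_of_nonneg
      hc.le, Real.norm_of_nonneg hd.le, hpq, div_self (by positivity)]
  · have h : p • e₁ + q • e₂ = (p / c) • ((c : ℂ) • e₁ + (c * q / (d * p) * d) • e₂) := by
      rw [smul_add, smul_smul, smul_smul]
      congr 2 <;> field_simp
    rw [hz, h, Submodule.span_singleton_smul_eq (IsUnit.mk0 _ (div_ne_zero hp hc'))]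

lemma alphaSet_alphaSet_subset_circleSet (hdim : 4 ≤ Module.rank ℂ H) {α : ℝ} (hα₀ : 0 ≤ α)
    (hαπ : α ≤ Real.pi) (ha₀ : 0 < Real.cos α) (hac : Real.cos α < c) (hd : 0 < d)
    (he₁ : ‖e₁‖ = 1) (he₂ : ‖e₂‖ = 1) (he₁₂ : ⟪e₁, e₂⟫_ℂ = 0) (hcd : c ^ 2 + d ^ 2 = 1)
    {ι : Type*} {lam : ι → ℂ} (hlam : ∀ j, ‖lam j‖ = 1) :
    alphaSet α (alphaSet α {x | ∃ j, x.submodule = ℂ ∙ ((c : ℂ) • e₁ + (lam j * d) • e₂)}) ⊆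
      circleSet e₁ e₂ c d := by
  classical
  intro z hz
  set u := z.rep
  set a := Real.cos α
  have hc : 0 < c := ha₀.trans hac
  have test := fun {w} => norm_inner_rep_of_mem_alphaSet_alphaSet hα₀ hαπ ha₀ hac.le
    he₁ he₂ he₁₂ hcd hlam hz (w := w)
  have hp : ‖⟪e₁, u⟫_ℂ‖ = c * ‖u‖ := by
    have hcard : (({e₁, e₂, u} : Finset H).card : Cardinal) < Module.rank ℂ H :=
      lt_of_lt_of_le (by exact_mod_cast Finset.card_le_three.trans_lt (by norm_num : 3 < 4)) hdim
    obtain ⟨w, hw, hwu⟩ := exists_norm_eq_one_forall_inner_eq_zero _ hcard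
    have h := test hw (hwu e₁ (by simp)) (hwu e₂ (by simp)) (norm_one (α := ℂ))
    rw [inner_eq_zero_symm.mp (hwu u (by simp)), mul_zero, add_zero, map_one, mul_one, norm_mul,
      Complex.norm_real, Real.norm_of_nonneg ha₀.le, mul_assoc] at h
    exact mul_left_cancel₀ ha₀.ne' h
  have hu₀ : 0 < ‖u‖ := norm_pos_iff.mpr z.rep_nonzero
  have hp₀ : ⟪e₁, u⟫_ℂ ≠ 0 := norm_ne_zero_iff.mp (by rw [hp]; positivity)
  -- Aligning the phase `μ` with `⟪e₁, u⟫` makes the first summand of the test real and positive.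
  have hu : u = ⟪e₁, u⟫_ℂ • e₁ + ⟪e₂, u⟫_ℂ • e₂ := by
    refine eq_inner_smul_add_inner_smul_of_forall he₁ he₂ he₁₂ (A := a * ‖⟪e₁, u⟫_ℂ‖)
      (t := √(c ^ 2 - a ^ 2)) (Real.sqrt_pos.mpr (by nlinarith)) fun w hw hw₁ hw₂ => ?_
    have halign : conj (⟪e₁, u⟫_ℂ / ‖⟪e₁, u⟫_ℂ‖) * ⟪e₁, u⟫_ℂ = ‖⟪e₁, u⟫_ℂ‖ := by
      have : (‖⟪e₁, u⟫_ℂ‖ : ℂ) ≠ 0 := by exact_mod_cast norm_ne_zero_iff.mpr hp₀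
      rw [map_div₀, Complex.conj_ofReal, div_mul_eq_mul_div, Complex.conj_mul', sq,
        mul_div_cancel_right₀ _ this]
    have h := test hw hw₁ hw₂ (μ := ⟪e₁, u⟫_ℂ / ‖⟪e₁, u⟫_ℂ‖) (by simp [hp₀])
    rw [mul_assoc, halign, ← Complex.ofReal_mul] at h
    rw [h, hp]
    ring
  have hq : c * ‖⟪e₂, u⟫_ℂ‖ = d * ‖⟪e₁, u⟫_ℂ‖ := by
    have h := norm_smul_add_smul_sq he₁ he₂ he₁₂ ⟪e₁, u⟫_ℂ ⟪e₂, u⟫_ℂ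
    rw [← hu, hp] at h
    have : ‖⟪e₂, u⟫_ℂ‖ = d * ‖u‖ := by
      rw [← pow_left_inj₀ (norm_nonneg _) (by positivity) two_ne_zero]
      nlinarith
    rw [this, hp]
    ring
  exact mem_circleSet_of_submodule_eq hc hd hp₀ hq (hu ▸ z.submodule_eq)

end Circle

theorem double_alphaSet_of_collinear_triple_dim_ge_four_general
    (hdim : 4 ≤ Module.rank ℂ H)
    (α : ℝ) (hα₁ : Real.pi / 4 < α) (hα₂ : α < Real.pi / 2)
    (c d : ℝ) (hdc : d ≤ c) (hd : 0 < d) (hcd : c ^ 2 + d ^ 2 = 1)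
    (lam : Fin 3 → ℂ) (hlam : ∀ j, ‖lam j‖ = 1) (hinj : Function.Injective lam)
    (e₁ e₂ : H) (he₁ : ‖e₁‖ = 1) (he₂ : ‖e₂‖ = 1) (he₁₂ : (inner ℂ e₁ e₂ : ℂ) = 0)
    (S₀ : Set (Projectivization ℂ H))
    (hS₀ : S₀ = {x | ∃ j : Fin 3,
      x.submodule = Submodule.span ℂ {(c : ℂ) • e₁ + (lam j * d) • e₂}}) :
    alphaSet α (alphaSet α S₀) = circleSet e₁ e₂ c d := by
  subst hS₀
  have hα₀ : 0 ≤ α := by linarith [Real.pi_pos]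
  have hαπ : α ≤ Real.pi := by linarith
  have hac : Real.cos α < c := cos_lt_of_pi_div_four_lt hα₁ hαπ (hd.trans_le hdc) (by nlinarith)
  exact (alphaSet_alphaSet_subset_circleSet hdim hα₀ hαπ
    (Real.cos_pos_of_mem_Ioo ⟨by linarith, hα₂⟩) hac hd he₁ he₂ he₁₂ hcd hlam).antisymm
    (circleSet_subset_alphaSet_alphaSet hα₀ hαπ he₁ he₂ he₁₂ hcd hlam hinj)

/-- the double-α-set of a collinear triple, dim ≥ 4. -/
theorem double_alphaSet_of_collinear_triple_dim_ge_four
    (hdim : 4 ≤ Module.rank ℂ H)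
    (α : ℝ) (hα₁ : Real.pi / 4 < α) (hα₂ : α < Real.pi / 2)
    (a : ℝ) (ha : a = Real.cos α)
    (c d : ℝ) (hdc : d ≤ c) (hd : 0 < d) (hcd : c ^ 2 + d ^ 2 = 1)
    (lam : Fin 3 → ℂ) (hlam : ∀ j, ‖lam j‖ = 1) (hinj : Function.Injective lam)
    (e₁ e₂ : H) (he₁ : ‖e₁‖ = 1) (he₂ : ‖e₂‖ = 1) (he₁₂ : (inner ℂ e₁ e₂ : ℂ) = 0)
    (S₀ : Set (Projectivization ℂ H))
    (hS₀ : S₀ = {x | ∃ j : Fin 3,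
      x.submodule = Submodule.span ℂ {(c : ℂ) • e₁ + (lam j * d) • e₂}}) :
    alphaSet α (alphaSet α S₀) = circleSet e₁ e₂ c d :=
  double_alphaSet_of_collinear_triple_dim_ge_four_general hdim α hα₁ hα₂ c d hdc hd hcd lam hlam
    hinj e₁ e₂ he₁ he₂ he₁₂ S₀ hS₀
end
end

section
/- Let H be a complex Hilbert space with dim H ≥ 3 and fix π/4 < α < π/2. Then for every subset S ⊆ P(H), the α-set S^⟨α⟩ is a closed subset of P(H) with respect to the quantum-angle metric. Furthermore, if dim H = 3, then every highly-α-symmetric set T ⊆ P(H) is compact, and T contains at least one element that is not an isolated point of T. -/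
noncomputable section

variable {H : Type*} [NormedAddCommGroup H] [InnerProductSpace ℂ H]

/-!
The quantum angle between the lines of `u` and `v` is the least real angle (for the real inner
product `Re ⟪·,·⟫`) between `u` and a phase multiple `c • v`, so it inherits the triangle
inequality of real angles. Hence `|∠(x, z) - ∠(y, z)| ≤ ∠(x, y)`, and every α-set is closed.
A highly-α-symmetric set is the double α-set of any three of its points, so it is closed as well.
In finite dimension the normalized representatives of a sequence of lines have a convergent
subsequence on the compact unit sphere, which gives sequential compactness; an injective sequence
in the infinite set then accumulates at one of its points.
-/

open Filter Topology InnerProductGeometry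

def qAngleVec (u v : H) : ℝ := Real.arccos (‖(inner ℂ u v : ℂ)‖ / (‖u‖ * ‖v‖))

lemma qAngle_eq_qAngleVec (x y : Projectivization ℂ H) : qAngle x y = qAngleVec x.rep y.rep :=
  rfl

lemma qAngleVec_comm (u v : H) : qAngleVec u v = qAngleVec v u := by
  rw [qAngleVec, qAngleVec, norm_inner_symm, mul_comm]

lemma qAngleVec_smul_left {c : ℂ} (hc : c ≠ 0) (u v : H) :
    qAngleVec (c • u) v = qAngleVec u v := by
  rw [qAngleVec, qAngleVec, inner_smul_left, norm_mul, norm_smul, RCLike.norm_conj, mul_assoc,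
    mul_div_mul_left _ _ (norm_ne_zero_iff.mpr hc)]

lemma qAngleVec_smul_right {c : ℂ} (hc : c ≠ 0) (u v : H) :
    qAngleVec u (c • v) = qAngleVec u v := by
  rw [qAngleVec_comm, qAngleVec_smul_left hc, qAngleVec_comm]

lemma qAngleVec_normalize_left (u v : H) :
    qAngleVec (NormedSpace.normalize u) v = qAngleVec u v := by
  rcases eq_or_ne u 0 with rfl | hu
  · simp
  · rw [NormedSpace.normalize, ← Complex.coe_smul]
    exact qAngleVec_smul_left (by simpa using hu) u v

lemma qAngle_mk {a b : H} (ha : a ≠ 0) (hb : b ≠ 0) :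
    qAngle (Projectivization.mk ℂ a ha) (Projectivization.mk ℂ b hb) = qAngleVec a b := by
  obtain ⟨c, hc⟩ := Projectivization.exists_smul_eq_mk_rep ℂ a ha
  obtain ⟨d, hd⟩ := Projectivization.exists_smul_eq_mk_rep ℂ b hb
  rw [qAngle_eq_qAngleVec, ← hc, ← hd, Units.smul_def, Units.smul_def,
    qAngleVec_smul_left c.ne_zero, qAngleVec_smul_right d.ne_zero]

lemma qAngle_comm (x y : Projectivization ℂ H) : qAngle x y = qAngle y x :=
  qAngleVec_comm _ _

section RealAngle

attribute [local instance] InnerProductSpace.complexToReal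

lemma qAngleVec_le_angle (u v : H) : qAngleVec u v ≤ angle u v :=
  Real.arccos_le_arccos (div_le_div_of_nonneg_right (Complex.re_le_norm _) (by positivity))

lemma exists_angle_smul_eq_qAngleVec (u v : H) :
    ∃ c : ℂ, c ≠ 0 ∧ angle u (c • v) = qAngleVec u v := by
  set z : ℂ := inner ℂ u v
  set c : ℂ := Complex.exp (-(z.arg : ℂ) * Complex.I)
  have hc : ‖c‖ = 1 := by simpa [c, neg_mul] using Complex.norm_exp_ofReal_mul_I (-z.arg)
  have hcz : c * z = ‖z‖ := by
    conv_lhs => rw [← Complex.norm_mul_exp_arg_mul_I z]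
    rw [mul_left_comm, ← Complex.exp_add]
    simp
  refine ⟨c, norm_ne_zero_iff.mp (by simp [hc]), ?_⟩
  show Real.arccos ((inner ℂ u (c • v)).re / (‖u‖ * ‖c • v‖)) = _
  rw [inner_smul_right, hcz, Complex.ofReal_re, norm_smul, hc, one_mul]
  rfl

lemma qAngleVec_triangle (u v w : H) : qAngleVec u w ≤ qAngleVec u v + qAngleVec v w := by
  obtain ⟨c, hc, huv⟩ := exists_angle_smul_eq_qAngleVec u v
  obtain ⟨d, hd, hvw⟩ := exists_angle_smul_eq_qAngleVec (c • v) w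
  calc qAngleVec u w = qAngleVec u (d • w) := (qAngleVec_smul_right hd u w).symm
    _ ≤ angle u (d • w) := qAngleVec_le_angle u _
    _ ≤ angle u (c • v) + angle (c • v) (d • w) := angle_le_angle_add_angle _ _ _
    _ = qAngleVec u v + qAngleVec v w := by rw [huv, hvw, qAngleVec_smul_left hc]

end RealAngle

lemma qAngle_triangle (x y z : Projectivization ℂ H) : qAngle x z ≤ qAngle x y + qAngle y z :=
  qAngleVec_triangle _ _ _

lemma abs_qAngle_sub_qAngle_le (x y z : Projectivization ℂ H) :
    |qAngle x z - qAngle y z| ≤ qAngle x y := by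
  have := qAngle_triangle x y z
  have := qAngle_triangle y x z
  rw [qAngle_comm y x] at this
  exact abs_sub_le_iff.mpr ⟨by linarith, by linarith⟩

lemma qAngleVec_self {v : H} (hv : v ≠ 0) : qAngleVec v v = 0 := by
  rw [qAngleVec, inner_self_eq_norm_sq_to_K]
  simp [sq, hv]

lemma tendsto_qAngleVec_of_tendsto {a : ℕ → H} {v : H} (hv : v ≠ 0)
    (ha : Tendsto a atTop (𝓝 v)) : Tendsto (fun n => qAngleVec (a n) v) atTop (𝓝 0) := by
  have hcont : ContinuousAt (fun u => qAngleVec u v) v := by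
    unfold qAngleVec
    fun_prop (disch := exact mul_ne_zero (norm_ne_zero_iff.mpr hv) (norm_ne_zero_iff.mpr hv))
  have := hcont.tendsto.comp ha
  rwa [qAngleVec_self hv] at this

lemma exists_subseq_tendsto_qAngle [ProperSpace H] (u : ℕ → Projectivization ℂ H) :
    ∃ x : Projectivization ℂ H, ∃ g : ℕ → ℕ, StrictMono g ∧
      Tendsto (fun n => qAngle (u (g n)) x) atTop (𝓝 0) := by
  set a : ℕ → H := fun n => NormedSpace.normalize (u n).rep
  have ha : ∀ n, a n ∈ Metric.sphere (0 : H) 1 := fun n => by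
    simpa [a] using (u n).rep_nonzero
  obtain ⟨v, hv, g, hg, hlim⟩ := (isCompact_sphere (0 : H) 1).tendsto_subseq ha
  have hv0 : v ≠ 0 := ne_zero_of_mem_unit_sphere ⟨v, hv⟩
  refine ⟨Projectivization.mk ℂ v hv0, g, hg, ?_⟩
  convert tendsto_qAngleVec_of_tendsto hv0 hlim using 2 with n
  rw [← Projectivization.mk_rep (u (g n)), qAngle_mk]
  exact (qAngleVec_normalize_left _ _).symm

def IsQAngleClosed (T : Set (Projectivization ℂ H)) : Prop :=
  ∀ x, (∀ ε : ℝ, 0 < ε → ∃ y ∈ T, qAngle x y < ε) → x ∈ T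

lemma isQAngleClosed_alphaSet (α : ℝ) (S : Set (Projectivization ℂ H)) :
    IsQAngleClosed (alphaSet α S) := by
  intro x hx y hy
  by_contra hne
  obtain ⟨z, hz, hxz⟩ := hx _ (abs_pos.mpr (sub_ne_zero.mpr hne))
  have := abs_qAngle_sub_qAngle_le x z y
  rw [hz y hy] at this
  linarith

lemma IsHighlyAlphaSymmetric.isQAngleClosed {α : ℝ} {T : Set (Projectivization ℂ H)}
    (hT : IsHighlyAlphaSymmetric α T) : IsQAngleClosed T := by
  obtain ⟨S, hST, -, hS⟩ := hT.1.exists_subset_ncard_eq 3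
  rw [← hT.2.2 S hST hS]
  exact isQAngleClosed_alphaSet α _

lemma IsQAngleClosed.exists_subseq_tendsto [ProperSpace H] {T : Set (Projectivization ℂ H)}
    (hT : IsQAngleClosed T) (u : ℕ → Projectivization ℂ H) (hu : ∀ n, u n ∈ T) :
    ∃ x ∈ T, ∃ g : ℕ → ℕ, StrictMono g ∧
      Tendsto (fun n => qAngle (u (g n)) x) atTop (𝓝 0) := by
  obtain ⟨x, g, hg, hlim⟩ := exists_subseq_tendsto_qAngle u
  refine ⟨x, hT x fun ε hε => ?_, g, hg, hlim⟩
  obtain ⟨n, hn⟩ := (hlim.eventually (gt_mem_nhds hε)).exists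
  exact ⟨u (g n), hu _, by rwa [qAngle_comm]⟩

lemma Set.Infinite.exists_accumulation_of_subseq_tendsto {X : Type*} {d : X → X → ℝ}
    {T : Set X} (hT : T.Infinite) (hseq : ∀ u : ℕ → X, (∀ n, u n ∈ T) →
      ∃ x ∈ T, ∃ g : ℕ → ℕ, StrictMono g ∧
        Tendsto (fun n => d (u (g n)) x) atTop (𝓝 0)) :
    ∃ x ∈ T, ∀ ε : ℝ, 0 < ε → ∃ y ∈ T, y ≠ x ∧ d y x < ε := by
  set u : ℕ → X := fun n => hT.natEmbedding T n
  have hu : Function.Injective u := Subtype.val_injective.comp hT.natEmbedding.injective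
  obtain ⟨x, hx, g, hg, hlim⟩ := hseq u fun n => (hT.natEmbedding T n).2
  refine ⟨x, hx, fun ε hε => ?_⟩
  obtain ⟨N, hN⟩ := eventually_atTop.mp (hlim.eventually (gt_mem_nhds hε))
  by_cases hxN : u (g N) = x
  · refine ⟨u (g (N + 1)), (hT.natEmbedding T _).2, fun h => ?_, hN _ N.le_succ⟩
    exact (hg N.lt_succ_self).ne' (hu (h.trans hxN.symm))
  · exact ⟨u (g N), (hT.natEmbedding T _).2, hxN, hN N le_rfl⟩

theorem alphaSet_closed_and_highly_symmetric_compact_general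
    (α : ℝ) :
    (∀ S : Set (Projectivization ℂ H), ∀ x : Projectivization ℂ H,
      (∀ ε : ℝ, 0 < ε → ∃ y ∈ alphaSet α S, qAngle x y < ε) → x ∈ alphaSet α S) ∧
    (Module.rank ℂ H = 3 →
      ∀ T : Set (Projectivization ℂ H), IsHighlyAlphaSymmetric α T →
        (∀ u : ℕ → Projectivization ℂ H, (∀ n, u n ∈ T) →
          ∃ x ∈ T, ∃ g : ℕ → ℕ, StrictMono g ∧
            Filter.Tendsto (fun n => qAngle (u (g n)) x) Filter.atTop (nhds 0)) ∧
        (∃ x ∈ T, ∀ ε : ℝ, 0 < ε → ∃ y ∈ T, y ≠ x ∧ qAngle y x < ε)) := by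
  refine ⟨isQAngleClosed_alphaSet α, fun hrank T hT => ?_⟩
  have : FiniteDimensional ℂ H := Module.finite_of_rank_eq_nat (by exact_mod_cast hrank)
  have hseq := hT.isQAngleClosed.exists_subseq_tendsto
  exact ⟨hseq, hT.1.exists_accumulation_of_subseq_tendsto hseq⟩

/-- α-sets are closed; in dimension three, highly-α-symmetric sets are
compact and contain a non-isolated point. Closedness, compactness (sequential) and
isolatedness are phrased explicitly in terms of the quantum-angle metric. -/
theorem alphaSet_closed_and_highly_symmetric_compact
    (hdim : 3 ≤ Module.rank ℂ H)
    (α : ℝ) (hα₁ : Real.pi / 4 < α) (hα₂ : α < Real.pi / 2) :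
    (∀ S : Set (Projectivization ℂ H), ∀ x : Projectivization ℂ H,
      (∀ ε : ℝ, 0 < ε → ∃ y ∈ alphaSet α S, qAngle x y < ε) → x ∈ alphaSet α S) ∧
    (Module.rank ℂ H = 3 →
      ∀ T : Set (Projectivization ℂ H), IsHighlyAlphaSymmetric α T →
        (∀ u : ℕ → Projectivization ℂ H, (∀ n, u n ∈ T) →
          ∃ x ∈ T, ∃ g : ℕ → ℕ, StrictMono g ∧
            Filter.Tendsto (fun n => qAngle (u (g n)) x) Filter.atTop (nhds 0)) ∧
        (∃ x ∈ T, ∀ ε : ℝ, 0 < ε → ∃ y ∈ T, y ≠ x ∧ qAngle y x < ε)) :=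
  alphaSet_closed_and_highly_symmetric_compact_general α
end
end

section
/- Let H be a complex Hilbert space with dim H = 3, fix π/4 < α < π/2 and set a := cos α. Let c ≥ d > 0 with c² + d² = 1, let λ₁, λ₂, λ₃ be pairwise different complex numbers of modulus 1, let {e₁, e₂} ⊆ H be an orthonormal system, set S₀ := {[c·e₁ + λ_j·d·e₂] : j = 1, 2, 3}, and let e₃ be a unit vector orthogonal to e₁ and e₂. If either c/√(1+c²) ≥ a > d, or (a,c,d) = (1/√3, √(2/3), 1/√3), or (a,c,d) = (1/√3, 1/√2, 1/√2), then S₀^⟨⟨α⟩⟩ is the disjoint union of the circle {[c·e₁ + λ·d·e₂] : λ ∈ ℂ, |λ| = 1} and the set {[√(1 − a²/(1 − a²/c²))·e₂ + λ·(a/√(1 − a²/c²))·e₃] : λ ∈ ℂ, |λ| = 1}. -/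
noncomputable section

variable {H : Type*} [NormedAddCommGroup H] [InnerProductSpace ℂ H]

/-!
Write a line as `[x e₁ + y e₂ + z e₃]` with `|x|² + |y|² + |z|² = 1`. Its angle with
`[c e₁ + λ d e₂]` is `α` iff `|c x̄ + λ d ȳ| = a`, and `|A + λ B|` can take the same value at three
distinct points of the unit circle only if `A = 0` or `B = 0`. So `S₀^⟨α⟩` consists of the lines
with `y = 0, c|x| = a` and those with `x = 0, d|y| = a`. Testing a line of `S₀^⟨⟨α⟩⟩` against
`[(a/c) e₁ + μ (a/q) e₃] ∈ S₀^⟨α⟩` for `μ = 1, -1, i`, where `q = a / √(1 - a²/c²)`, forces `x = 0`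
or `z = 0`, i.e. the line lies on `[c e₁ + λ d e₂]` or on `[p e₂ + μ q e₃]`, `p² + q² = 1`.
Conversely the first circle is at angle `α` from all of `S₀^⟨α⟩`, the second one from the lines
with `y = 0`, and the hypotheses on `(a, c, d)` are what makes it so for the lines with `x = 0`:
there are none (`a > d`), they reduce to `[e₂]` and `p = a`, or the second circle reduces to `[e₃]`
and those lines have `|z| = a`.
-/

open ComplexConjugate Projectivization
open scoped InnerProductSpace

lemma Projectivization.submodule_eq_span_singleton_iff {K V : Type*} [DivisionRing K]
    [AddCommGroup V] [Module K V] (P : Projectivization K V) {w : V} (hw : w ≠ 0) :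
    P.submodule = Submodule.span K {w} ↔ P = mk K w hw := by
  rw [← submodule_mk w hw]
  exact submodule_injective.eq_iff

lemma Projectivization.exists_norm_eq_one_eq_mk {𝕜 E : Type*} [RCLike 𝕜] [NormedAddCommGroup E]
    [NormedSpace 𝕜 E] (P : Projectivization 𝕜 E) :
    ∃ (u : E) (hu : u ≠ 0), ‖u‖ = 1 ∧ P = mk 𝕜 u hu := by
  induction P with | h v hv =>
  have hu : ‖(‖v‖⁻¹ : 𝕜) • v‖ = 1 := norm_smul_inv_norm hv
  refine ⟨_, norm_ne_zero_iff.1 (by simp [hu]), hu, (mk_eq_mk_iff' 𝕜 _ _ _ _).2 ⟨‖v‖, ?_⟩⟩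
  rw [smul_smul, mul_inv_cancel₀ (by simpa using hv), one_smul]

lemma qAngle_mk_s15 {u v : H} (hu : u ≠ 0) (hv : v ≠ 0) :
    qAngle (mk ℂ u hu) (mk ℂ v hv) = Real.arccos (‖⟪u, v⟫_ℂ‖ / (‖u‖ * ‖v‖)) := by
  obtain ⟨s, hs⟩ := exists_smul_eq_mk_rep ℂ u hu
  obtain ⟨t, ht⟩ := exists_smul_eq_mk_rep ℂ v hv
  have hs0 : ‖(s : ℂ)‖ ≠ 0 := by simp
  have ht0 : ‖(t : ℂ)‖ ≠ 0 := by simp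
  rw [qAngle, ← hs, ← ht]
  simp only [Units.smul_def, inner_smul_left, inner_smul_right, norm_smul, norm_mul,
    RCLike.norm_conj]
  congr 1
  field_simp

lemma qAngle_mk_eq_iff {u v : H} (hu : u ≠ 0) (hv : v ≠ 0) (hu₁ : ‖u‖ = 1) (hv₁ : ‖v‖ = 1)
    {α : ℝ} (hα₀ : 0 ≤ α) (hαπ : α ≤ Real.pi) :
    qAngle (mk ℂ u hu) (mk ℂ v hv) = α ↔ ‖⟪u, v⟫_ℂ‖ = Real.cos α := by
  have hle : ‖⟪u, v⟫_ℂ‖ ≤ 1 := by simpa [hu₁, hv₁] using norm_inner_le_norm (𝕜 := ℂ) u v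
  rw [qAngle_mk_s15, hu₁, hv₁, mul_one, div_one]
  constructor
  · rintro rfl
    exact (Real.cos_arccos (by linarith [norm_nonneg ⟪u, v⟫_ℂ]) hle).symm
  · intro h
    rw [h, Real.arccos_cos hα₀ hαπ]

lemma mk_mem_alphaSet_iff {ι : Type*} {w : ι → H} (hw : ∀ i, ‖w i‖ = 1) {u : H} (hu : u ≠ 0)
    (hu₁ : ‖u‖ = 1) {α : ℝ} (hα₀ : 0 ≤ α) (hαπ : α ≤ Real.pi) :
    mk ℂ u hu ∈ alphaSet α {P | ∃ i, P.submodule = Submodule.span ℂ {w i}} ↔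
      ∀ i, ‖⟪u, w i⟫_ℂ‖ = Real.cos α := by
  have hw0 : ∀ i, w i ≠ 0 := fun i => norm_ne_zero_iff.1 (by simp [hw i])
  simp only [alphaSet, Set.mem_ofPred_eq, forall_exists_index]
  rw [forall_comm]
  refine forall_congr' fun i => ?_
  simp only [submodule_eq_span_singleton_iff _ (hw0 i), forall_eq]
  exact qAngle_mk_eq_iff hu (hw0 i) hu₁ (hw i) hα₀ hαπ

lemma eq_zero_of_three_roots_quadratic {A B C z₁ z₂ z₃ : ℂ}
    (h₁₂ : z₁ ≠ z₂) (h₁₃ : z₁ ≠ z₃) (h₂₃ : z₂ ≠ z₃)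
    (h₁ : A * z₁ ^ 2 + B * z₁ + C = 0) (h₂ : A * z₂ ^ 2 + B * z₂ + C = 0)
    (h₃ : A * z₃ ^ 2 + B * z₃ + C = 0) : A = 0 := by
  have e₁₂ : (z₁ - z₂) * (A * (z₁ + z₂) + B) = 0 := by linear_combination h₁ - h₂
  have e₁₃ : (z₁ - z₃) * (A * (z₁ + z₃) + B) = 0 := by linear_combination h₁ - h₃
  have f₁₂ := (mul_eq_zero.1 e₁₂).resolve_left (sub_ne_zero.2 h₁₂)
  have f₁₃ := (mul_eq_zero.1 e₁₃).resolve_left (sub_ne_zero.2 h₁₃)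
  have : A * (z₂ - z₃) = 0 := by linear_combination f₁₂ - f₁₃
  exact (mul_eq_zero.1 this).resolve_right (sub_ne_zero.2 h₂₃)

lemma eq_zero_or_eq_zero_of_norm_add_mul_eq {A B ν₁ ν₂ ν₃ : ℂ} {r : ℝ}
    (h₁ : ‖ν₁‖ = 1) (h₂ : ‖ν₂‖ = 1) (h₃ : ‖ν₃‖ = 1)
    (h₁₂ : ν₁ ≠ ν₂) (h₁₃ : ν₁ ≠ ν₃) (h₂₃ : ν₂ ≠ ν₃)
    (hr₁ : ‖A + ν₁ * B‖ = r) (hr₂ : ‖A + ν₂ * B‖ = r) (hr₃ : ‖A + ν₃ * B‖ = r) :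
    A = 0 ∨ B = 0 := by
  -- multiplying `|A + ν B|² = r²` by `ν` and using `ν ν̄ = 1` gives a quadratic equation in `ν`
  have quad : ∀ ν : ℂ, ‖ν‖ = 1 → ‖A + ν * B‖ = r →
      conj A * B * ν ^ 2 + (conj A * A + conj B * B - (r : ℂ) ^ 2) * ν + A * conj B = 0 := by
    intro ν hν h
    have hsq : (A + ν * B) * conj (A + ν * B) = (r : ℂ) ^ 2 := by
      rw [Complex.mul_conj, Complex.normSq_eq_norm_sq, h]; push_cast; ring
    have hν' : ν * conj ν = 1 := by
      rw [Complex.mul_conj, Complex.normSq_eq_norm_sq, hν]; norm_num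
    simp only [map_add, map_mul] at hsq
    linear_combination ν * hsq - (A * conj B + ν * (B * conj B)) * hν'
  simpa using eq_zero_of_three_roots_quadratic h₁₂ h₁₃ h₂₃
    (quad ν₁ h₁ hr₁) (quad ν₂ h₂ hr₂) (quad ν₃ h₃ hr₃)

lemma mem_circleSet_iff {e f : H} {c d : ℝ} (hc : 0 ≤ c) (hd : 0 < d)
    {P : Projectivization ℂ H} :
    P ∈ circleSet e f c d ↔
      ∃ x y : ℂ, ‖x‖ = c ∧ ‖y‖ = d ∧ P.submodule = Submodule.span ℂ {x • e + y • f} := by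
  constructor
  · rintro ⟨lam, hlam, hP⟩
    exact ⟨c, lam * d, by simp [abs_of_nonneg hc], by simp [hlam, abs_of_pos hd], hP⟩
  · rintro ⟨x, y, rfl, rfl, hP⟩
    have hy : y ≠ 0 := norm_pos_iff.1 hd
    rcases eq_or_ne x 0 with rfl | hx
    · refine ⟨y / ‖y‖, by simp [hy], ?_⟩
      rw [hP, div_mul_cancel₀ _ (by simpa using hy)]
      simp
    · refine ⟨y * ‖x‖ / (x * ‖y‖), by simp [field], ?_⟩
      have hxn : (‖x‖ : ℂ) ≠ 0 := by simpa using hx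
      have hyn : (‖y‖ : ℂ) ≠ 0 := by simpa using hy
      have hrw : x • e + y • f =
          (x / ‖x‖) • ((‖x‖ : ℂ) • e + (y * ‖x‖ / (x * ‖y‖) * ‖y‖) • f) := by
        rw [smul_add, smul_smul, smul_smul]
        congr 2 <;> field_simp
      rw [hP, hrw, Submodule.span_singleton_smul_eq (div_ne_zero hx hxn).isUnit]

section Frame

variable {e₁ e₂ e₃ : H}

lemma orthonormal_three (h₁ : ‖e₁‖ = 1) (h₂ : ‖e₂‖ = 1) (h₃ : ‖e₃‖ = 1)
    (h₁₂ : ⟪e₁, e₂⟫_ℂ = 0) (h₁₃ : ⟪e₁, e₃⟫_ℂ = 0) (h₂₃ : ⟪e₂, e₃⟫_ℂ = 0) :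
    Orthonormal ℂ ![e₁, e₂, e₃] := by
  refine ⟨fun i => by fin_cases i <;> simpa, fun i j hij => ?_⟩
  fin_cases i <;> fin_cases j <;> simp_all [inner_eq_zero_symm]

variable (he : Orthonormal ℂ ![e₁, e₂, e₃])
include he

lemma Orthonormal.inner_smul_add_smul_add_smul (x y z x' y' z' : ℂ) :
    ⟪x • e₁ + y • e₂ + z • e₃, x' • e₁ + y' • e₂ + z' • e₃⟫_ℂ =
      conj x * x' + conj y * y' + conj z * z' := by
  have h := he.inner_sum ![x, y, z] ![x', y', z'] Finset.univ
  simp only [Fin.sum_univ_three, Matrix.cons_val_zero, Matrix.cons_val_one,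
    Matrix.cons_val_two, Matrix.head_cons, Matrix.tail_cons] at h
  rw [h]

lemma Orthonormal.norm_smul_add_smul_add_smul_sq (x y z : ℂ) :
    ‖x • e₁ + y • e₂ + z • e₃‖ ^ 2 = ‖x‖ ^ 2 + ‖y‖ ^ 2 + ‖z‖ ^ 2 := by
  have h := he.inner_smul_add_smul_add_smul x y z x y z
  rw [inner_self_eq_norm_sq_to_K] at h
  simp only [RCLike.conj_mul] at h
  exact_mod_cast h

lemma Orthonormal.exists_eq_smul_add_smul_add_smul (hdim : Module.rank ℂ H = 3) (u : H) :
    ∃ x y z : ℂ, u = x • e₁ + y • e₂ + z • e₃ := by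
  have hspan := he.linearIndependent.span_eq_top_of_card_eq_finrank
    (by simp [Module.finrank_eq_of_rank_eq (n := 3) (by exact_mod_cast hdim)])
  have hu : u ∈ Submodule.span ℂ (Set.range ![e₁, e₂, e₃]) := hspan ▸ Submodule.mem_top
  obtain ⟨l, rfl⟩ := (Submodule.mem_span_range_iff_exists_fun ℂ).1 hu
  exact ⟨l 0, l 1, l 2, by simp [Fin.sum_univ_three]⟩

lemma Orthonormal.exists_eq_mk_smul_add_smul_add_smul (hdim : Module.rank ℂ H = 3)
    (P : Projectivization ℂ H) :
    ∃ (x y z : ℂ) (h : x • e₁ + y • e₂ + z • e₃ ≠ 0),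
      ‖x‖ ^ 2 + ‖y‖ ^ 2 + ‖z‖ ^ 2 = 1 ∧ P = mk ℂ _ h := by
  obtain ⟨u, hu, hu₁, rfl⟩ := P.exists_norm_eq_one_eq_mk
  obtain ⟨x, y, z, rfl⟩ := he.exists_eq_smul_add_smul_add_smul hdim u
  exact ⟨x, y, z, hu, by rw [← he.norm_smul_add_smul_add_smul_sq, hu₁, one_pow], rfl⟩

lemma Orthonormal.norm_smul_add_smul_add_smul_eq_one {x y z : ℂ}
    (hn : ‖x‖ ^ 2 + ‖y‖ ^ 2 + ‖z‖ ^ 2 = 1) : ‖x • e₁ + y • e₂ + z • e₃‖ = 1 := by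
  rw [← pow_left_inj₀ (norm_nonneg _) zero_le_one two_ne_zero,
    he.norm_smul_add_smul_add_smul_sq, hn, one_pow]

lemma Orthonormal.smul_add_smul_add_smul_ne_zero {x y z : ℂ}
    (hn : ‖x‖ ^ 2 + ‖y‖ ^ 2 + ‖z‖ ^ 2 = 1) : x • e₁ + y • e₂ + z • e₃ ≠ 0 :=
  norm_ne_zero_iff.1 (by simp [he.norm_smul_add_smul_add_smul_eq_one hn])

variable {α : ℝ} (hα₀ : 0 ≤ α) (hαπ : α ≤ Real.pi)
include hα₀ hαπ

lemma qAngle_mk_smul_add_smul_add_smul_eq_iff {x y z x' y' z' : ℂ}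
    (h : x • e₁ + y • e₂ + z • e₃ ≠ 0) (h' : x' • e₁ + y' • e₂ + z' • e₃ ≠ 0)
    (hn : ‖x‖ ^ 2 + ‖y‖ ^ 2 + ‖z‖ ^ 2 = 1) (hn' : ‖x'‖ ^ 2 + ‖y'‖ ^ 2 + ‖z'‖ ^ 2 = 1) :
    qAngle (mk ℂ _ h) (mk ℂ _ h') = α ↔
      ‖conj x * x' + conj y * y' + conj z * z'‖ = Real.cos α := by
  rw [qAngle_mk_eq_iff h h' (he.norm_smul_add_smul_add_smul_eq_one hn)
    (he.norm_smul_add_smul_add_smul_eq_one hn') hα₀ hαπ, he.inner_smul_add_smul_add_smul]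

variable {c d : ℝ} (hc : 0 < c) (hd : 0 < d) (hcd : c ^ 2 + d ^ 2 = 1)
  {lam : Fin 3 → ℂ} (hlam : ∀ j, ‖lam j‖ = 1) (hinj : Function.Injective lam)
include hc hd hcd hlam hinj

lemma mk_mem_alphaSet_iff_of_injective {x y z : ℂ} (h : x • e₁ + y • e₂ + z • e₃ ≠ 0)
    (hn : ‖x‖ ^ 2 + ‖y‖ ^ 2 + ‖z‖ ^ 2 = 1) :
    mk ℂ _ h ∈ alphaSet α
        {P | ∃ j, P.submodule = Submodule.span ℂ {(c : ℂ) • e₁ + (lam j * d) • e₂}} ↔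
      (x = 0 ∧ d * ‖y‖ = Real.cos α) ∨ (y = 0 ∧ c * ‖x‖ = Real.cos α) := by
  have hw : ∀ j, ‖(c : ℂ) • e₁ + (lam j * d) • e₂‖ = 1 := fun j => by
    have := he.norm_smul_add_smul_add_smul_eq_one (x := c) (y := lam j * d) (z := 0)
      (by simpa [norm_mul, hlam, abs_of_pos hc, abs_of_pos hd] using hcd)
    rwa [zero_smul, add_zero] at this
  have hinner : ∀ j, ⟪x • e₁ + y • e₂ + z • e₃, (c : ℂ) • e₁ + (lam j * d) • e₂⟫_ℂ =
      c * conj x + lam j * (d * conj y) := fun j => by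
    have := he.inner_smul_add_smul_add_smul x y z c (lam j * d) 0
    simp only [zero_smul, add_zero, mul_zero] at this
    rw [this]; ring
  rw [mk_mem_alphaSet_iff hw h (he.norm_smul_add_smul_add_smul_eq_one hn) hα₀ hαπ]
  simp only [hinner]
  have hc' : (c : ℂ) ≠ 0 := by exact_mod_cast hc.ne'
  have hd' : (d : ℂ) ≠ 0 := by exact_mod_cast hd.ne'
  constructor
  · intro hj
    have h0 := hj 0
    rcases eq_zero_or_eq_zero_of_norm_add_mul_eq (hlam 0) (hlam 1) (hlam 2)
      (hinj.ne (by decide)) (hinj.ne (by decide)) (hinj.ne (by decide)) h0 (hj 1) (hj 2)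
      with hx | hy
    · simp only [mul_eq_zero, hc', map_eq_zero, false_or] at hx
      simp [hx, hlam, abs_of_pos hd] at h0
      exact Or.inl ⟨hx, h0⟩
    · simp only [mul_eq_zero, hd', map_eq_zero, false_or] at hy
      simp [hy, abs_of_pos hc] at h0
      exact Or.inr ⟨hy, h0⟩
  · rintro (⟨rfl, h⟩ | ⟨rfl, h⟩) j <;> simpa [norm_mul, hlam, abs_of_pos hc, abs_of_pos hd]

lemma eq_zero_and_norm_eq_of_mem_alphaSet_alphaSet (ha : 0 < Real.cos α) {q : ℝ} (hq : 0 < q)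
    (hacq : (Real.cos α / c) ^ 2 + (Real.cos α / q) ^ 2 = 1) {x y z : ℂ}
    (h : x • e₁ + y • e₂ + z • e₃ ≠ 0) (hn : ‖x‖ ^ 2 + ‖y‖ ^ 2 + ‖z‖ ^ 2 = 1)
    (hP : mk ℂ _ h ∈ alphaSet α (alphaSet α
        {P | ∃ j, P.submodule = Submodule.span ℂ {(c : ℂ) • e₁ + (lam j * d) • e₂}})) :
    (x = 0 ∧ ‖z‖ = q) ∨ (z = 0 ∧ ‖x‖ = c) := by
  set a := Real.cos α
  -- test against the lines `[(a/c) e₁ + μ (a/q) e₃]` of `S₀^⟨α⟩`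
  have htest : ∀ μ : ℂ, ‖μ‖ = 1 →
      ‖(a / c : ℝ) * conj x + μ * ((a / q : ℝ) * conj z)‖ = a := by
    intro μ hμ
    have hnμ : ‖((a / c : ℝ) : ℂ)‖ ^ 2 + ‖(0 : ℂ)‖ ^ 2 + ‖μ * ((a / q : ℝ) : ℂ)‖ ^ 2 = 1 := by
      simpa [norm_mul, hμ, abs_of_pos ha, abs_of_pos hc, abs_of_pos hq] using hacq
    have hQ := (mk_mem_alphaSet_iff_of_injective he hα₀ hαπ hc hd hcd hlam hinj
      (he.smul_add_smul_add_smul_ne_zero hnμ) hnμ).2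
      (Or.inr ⟨rfl, by simpa [abs_of_pos ha, abs_of_pos hc] using mul_div_cancel₀ _ hc.ne'⟩)
    refine Eq.trans ?_ ((qAngle_mk_smul_add_smul_add_smul_eq_iff he hα₀ hαπ h _ hn hnμ).1 (hP _ hQ))
    congr 1
    ring
  have hI : ‖Complex.I‖ = 1 := Complex.norm_I
  have h₁ := htest 1 (by simp)
  rcases eq_zero_or_eq_zero_of_norm_add_mul_eq (by simp) (by simp) hI (by norm_num)
      (by simp [Complex.ext_iff]) (by simp [Complex.ext_iff]) h₁
      (htest (-1) (by simp)) (htest Complex.I hI) with hx | hz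
  · have hx : x = 0 := by simpa [ha.ne', hc.ne'] using hx
    simp [hx, abs_of_pos ha, abs_of_pos hq] at h₁
    field_simp at h₁
    exact Or.inl ⟨hx, by linarith⟩
  · have hz : z = 0 := by simpa [ha.ne', hq.ne'] using hz
    simp [hz, abs_of_pos ha, abs_of_pos hc] at h₁
    field_simp at h₁
    exact Or.inr ⟨hz, by linarith⟩

lemma alphaSet_alphaSet_subset_union (hdim : Module.rank ℂ H = 3) (ha : 0 < Real.cos α)
    {p q : ℝ} (hp : 0 ≤ p) (hq : 0 < q) (hpq : p ^ 2 + q ^ 2 = 1)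
    (hacq : (Real.cos α / c) ^ 2 + (Real.cos α / q) ^ 2 = 1) :
    alphaSet α (alphaSet α
        {P | ∃ j, P.submodule = Submodule.span ℂ {(c : ℂ) • e₁ + (lam j * d) • e₂}}) ⊆
      circleSet e₁ e₂ c d ∪ circleSet e₂ e₃ p q := by
  intro P hP
  obtain ⟨x, y, z, h, hn, rfl⟩ := he.exists_eq_mk_smul_add_smul_add_smul hdim P
  rcases eq_zero_and_norm_eq_of_mem_alphaSet_alphaSet he hα₀ hαπ hc hd hcd hlam hinj ha hq hacq
    h hn hP with ⟨rfl, hz⟩ | ⟨rfl, hx⟩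
  · have hy : ‖y‖ = p := by
      rw [← sq_eq_sq₀ (norm_nonneg _) hp]
      simp [hz] at hn
      linarith
    exact Or.inr ((mem_circleSet_iff hp hq).2 ⟨y, z, hy, hz, by simp⟩)
  · have hy : ‖y‖ = d := by
      rw [← sq_eq_sq₀ (norm_nonneg _) hd.le]
      simp [hx] at hn
      linarith
    exact Or.inl ((mem_circleSet_iff hc.le hd).2 ⟨x, y, hx, hy, by simp⟩)

lemma circleSet_subset_alphaSet_alphaSet_s15 (hdim : Module.rank ℂ H = 3) :
    circleSet e₁ e₂ c d ⊆ alphaSet α (alphaSet α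
        {P | ∃ j, P.submodule = Submodule.span ℂ {(c : ℂ) • e₁ + (lam j * d) • e₂}}) := by
  intro P hP t ht
  obtain ⟨X, Y, hX, hY, hPX⟩ := (mem_circleSet_iff hc.le hd).1 hP
  obtain ⟨x, y, z, h, hn, rfl⟩ := he.exists_eq_mk_smul_add_smul_add_smul hdim t
  have hN : ‖X‖ ^ 2 + ‖Y‖ ^ 2 + ‖(0 : ℂ)‖ ^ 2 = 1 := by simp [hX, hY, hcd]
  have hP' : P = mk ℂ _ (he.smul_add_smul_add_smul_ne_zero hN) := by
    rw [← submodule_eq_span_singleton_iff, hPX, zero_smul, add_zero]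
  rw [hP', qAngle_mk_smul_add_smul_add_smul_eq_iff he hα₀ hαπ _ h hN hn]
  rcases (mk_mem_alphaSet_iff_of_injective he hα₀ hαπ hc hd hcd hlam hinj h hn).1 ht with
    ⟨rfl, hy⟩ | ⟨rfl, hx⟩
  · simpa [hY] using hy
  · simpa [hX] using hx

lemma circleSet_subset_alphaSet_alphaSet_of_forall (hdim : Module.rank ℂ H = 3) {p q : ℝ}
    (hp : 0 ≤ p) (hq : 0 < q) (hpq : p ^ 2 + q ^ 2 = 1)
    (hacq : (Real.cos α / c) ^ 2 + (Real.cos α / q) ^ 2 = 1)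
    (hexc : ∀ y z Y Z : ℂ, ‖y‖ ^ 2 + ‖z‖ ^ 2 = 1 → d * ‖y‖ = Real.cos α → ‖Y‖ = p → ‖Z‖ = q →
      ‖conj Y * y + conj Z * z‖ = Real.cos α) :
    circleSet e₂ e₃ p q ⊆ alphaSet α (alphaSet α
        {P | ∃ j, P.submodule = Submodule.span ℂ {(c : ℂ) • e₁ + (lam j * d) • e₂}}) := by
  intro P hP t ht
  obtain ⟨Y, Z, hY, hZ, hPY⟩ := (mem_circleSet_iff hp hq).1 hP
  obtain ⟨x, y, z, h, hn, rfl⟩ := he.exists_eq_mk_smul_add_smul_add_smul hdim t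
  have hN : ‖(0 : ℂ)‖ ^ 2 + ‖Y‖ ^ 2 + ‖Z‖ ^ 2 = 1 := by simp [hY, hZ, hpq]
  have hP' : P = mk ℂ _ (he.smul_add_smul_add_smul_ne_zero hN) := by
    rw [← submodule_eq_span_singleton_iff, hPY, zero_smul, zero_add]
  rw [hP', qAngle_mk_smul_add_smul_add_smul_eq_iff he hα₀ hαπ _ h hN hn]
  rcases (mk_mem_alphaSet_iff_of_injective he hα₀ hαπ hc hd hcd hlam hinj h hn).1 ht with
    ⟨rfl, hy⟩ | ⟨rfl, hx⟩
  · simpa using hexc y z Y Z (by simpa using hn) hy hY hZ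
  · have hz : ‖z‖ = Real.cos α / q := by
      have ha : 0 ≤ Real.cos α := hx ▸ by positivity
      rw [← sq_eq_sq₀ (norm_nonneg _) (by positivity), ← hx]
      rw [← hx] at hacq
      field_simp at hacq ⊢
      simp at hn
      nlinarith
    simpa [hZ, hz] using mul_div_cancel₀ (Real.cos α) hq.ne'

end Frame

lemma disjoint_circleSet {e₁ e₂ e₃ : H} {c d p q : ℝ} (he₁ : e₁ ≠ 0)
    (h₁₂ : ⟪e₁, e₂⟫_ℂ = 0) (h₁₃ : ⟪e₁, e₃⟫_ℂ = 0) (hc : c ≠ 0) :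
    Disjoint (circleSet e₁ e₂ c d) (circleSet e₂ e₃ p q) := by
  rw [Set.disjoint_left]
  rintro P ⟨l, -, h₁⟩ ⟨m, -, h₂⟩
  obtain ⟨t, ht⟩ := Submodule.mem_span_singleton.1
    (h₂ ▸ h₁ ▸ Submodule.mem_span_singleton_self ((c : ℂ) • e₁ + (l * d) • e₂))
  have := congrArg (inner ℂ e₁) ht
  simp [h₁₂, h₁₃, he₁, hc] at this

def ExceptionalParams (a c d : ℝ) : Prop :=
  (a ≤ c / Real.sqrt (1 + c ^ 2) ∧ d < a) ∨
    (a = 1 / Real.sqrt 3 ∧ c = Real.sqrt (2 / 3) ∧ d = 1 / Real.sqrt 3) ∨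
    (a = 1 / Real.sqrt 3 ∧ c = 1 / Real.sqrt 2 ∧ d = 1 / Real.sqrt 2)

namespace ExceptionalParams

variable {a c d : ℝ}

lemma pos_and_sq_mul_le (h : ExceptionalParams a c d) (hd : 0 < d) :
    0 < a ∧ 0 < c ∧ a ^ 2 * (1 + c ^ 2) ≤ c ^ 2 := by
  rcases h with ⟨hac, hda⟩ | ⟨rfl, rfl, -⟩ | ⟨rfl, rfl, -⟩
  · have ha := hd.trans hda
    have hs := Real.sqrt_pos.2 (by positivity : (0 : ℝ) < 1 + c ^ 2)
    have hc : 0 < c := by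
      by_contra! hc
      exact (ha.trans_le hac).not_ge (div_nonpos_of_nonpos_of_nonneg hc hs.le)
    refine ⟨ha, hc, ?_⟩
    have := pow_le_pow_left₀ ha.le hac 2
    rw [div_pow, Real.sq_sqrt (by positivity), le_div_iff₀ (by positivity)] at this
    exact this
  all_goals refine ⟨by positivity, by positivity, ?_⟩; norm_num [div_pow]

lemma norm_conj_mul_add_conj_mul_eq (h : ExceptionalParams a c d) (hd : 0 < d) {p q : ℝ}
    (hp : p = Real.sqrt (1 - a ^ 2 / (1 - a ^ 2 / c ^ 2))) (hpq : p ^ 2 + q ^ 2 = 1)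
    {y z Y Z : ℂ} (hyz : ‖y‖ ^ 2 + ‖z‖ ^ 2 = 1) (hy : d * ‖y‖ = a) (hY : ‖Y‖ = p)
    (hZ : ‖Z‖ = q) : ‖conj Y * y + conj Z * z‖ = a := by
  rcases h with ⟨-, hda⟩ | ⟨rfl, rfl, rfl⟩ | ⟨rfl, rfl, rfl⟩
  · nlinarith [norm_nonneg y, sq_nonneg ‖z‖]
  all_goals
    have h3 : (1 / Real.sqrt 3) ^ 2 = 1 / 3 := by rw [div_pow, Real.sq_sqrt] <;> norm_num
    have hq : 0 ≤ q := hZ ▸ norm_nonneg Z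
  · have hy : ‖y‖ = 1 := mul_left_cancel₀ (by positivity) (hy.trans (mul_one _).symm)
    have hz : z = 0 := by simpa [hy] using hyz
    have hp : p = 1 / Real.sqrt 3 := by
      have h23 : Real.sqrt (2 / 3) ^ 2 = 2 / 3 := Real.sq_sqrt (by norm_num)
      rw [← sq_eq_sq₀ (hY ▸ norm_nonneg Y) (by positivity), h3, hp, h3, h23,
        Real.sq_sqrt (by norm_num)]
      norm_num
    simp [hz, hY, hy, hp]
  · have h2 : (1 / Real.sqrt 2) ^ 2 = 1 / 2 := by rw [div_pow, Real.sq_sqrt] <;> norm_num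
    have hp : p = 0 := by
      rw [← sq_eq_sq₀ (hY ▸ norm_nonneg Y) le_rfl, hp, Real.sq_sqrt (by norm_num [h2, h3])]
      norm_num [h2, h3]
    have hq : q = 1 := by nlinarith
    have hy : ‖y‖ ^ 2 = 2 / 3 := by
      have := congrArg (· ^ 2) hy
      simp only [mul_pow, h2, h3] at this
      linarith
    have hz : ‖z‖ = 1 / Real.sqrt 3 := by
      rw [← sq_eq_sq₀ (norm_nonneg _) (by positivity), h3]
      linarith
    simp [norm_eq_zero.1 (hY.trans hp), hZ, hq, hz]

end ExceptionalParams

lemma second_circle_radii {a c p q : ℝ} (ha : 0 < a) (hc : 0 < c)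
    (hac : a ^ 2 * (1 + c ^ 2) ≤ c ^ 2)
    (hq : q = a / Real.sqrt (1 - a ^ 2 / c ^ 2))
    (hp : p = Real.sqrt (1 - a ^ 2 / (1 - a ^ 2 / c ^ 2))) :
    0 < q ∧ p ^ 2 + q ^ 2 = 1 ∧ (a / c) ^ 2 + (a / q) ^ 2 = 1 := by
  have hβ : 0 < 1 - a ^ 2 / c ^ 2 := by
    rw [sub_pos, div_lt_one (by positivity)]
    nlinarith [mul_pos (pow_pos ha 2) (pow_pos hc 2)]
  have hq2 : q ^ 2 = a ^ 2 / (1 - a ^ 2 / c ^ 2) := by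
    rw [hq, div_pow, Real.sq_sqrt hβ.le]
  have hq1 : a ^ 2 / (1 - a ^ 2 / c ^ 2) ≤ 1 := by
    rw [div_le_one hβ, le_sub_iff_add_le, ← le_sub_iff_add_le', div_le_iff₀ (by positivity)]
    nlinarith
  refine ⟨hq ▸ div_pos ha (Real.sqrt_pos.2 hβ), ?_, ?_⟩
  · rw [hp, Real.sq_sqrt (by linarith), hq2]; ring
  · rw [div_pow a q, hq2]; field_simp; ring

theorem double_alphaSet_dim_three_exceptional_general
    (hdim : Module.rank ℂ H = 3)
    (α : ℝ) (hα₁ : Real.pi / 4 < α) (hα₂ : α < Real.pi / 2)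
    (a : ℝ) (ha : a = Real.cos α)
    (c d : ℝ) (hd : 0 < d) (hcd : c ^ 2 + d ^ 2 = 1)
    (lam : Fin 3 → ℂ) (hlam : ∀ j, ‖lam j‖ = 1) (hinj : Function.Injective lam)
    (e₁ e₂ e₃ : H) (he₁ : ‖e₁‖ = 1) (he₂ : ‖e₂‖ = 1) (he₃ : ‖e₃‖ = 1)
    (he₁₂ : (inner ℂ e₁ e₂ : ℂ) = 0) (he₁₃ : (inner ℂ e₁ e₃ : ℂ) = 0)
    (he₂₃ : (inner ℂ e₂ e₃ : ℂ) = 0)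
    (S₀ : Set (Projectivization ℂ H))
    (hS₀ : S₀ = {x | ∃ j : Fin 3,
      x.submodule = Submodule.span ℂ {(c : ℂ) • e₁ + (lam j * d) • e₂}})
    (hcase : (a ≤ c / Real.sqrt (1 + c ^ 2) ∧ d < a) ∨
      (a = 1 / Real.sqrt 3 ∧ c = Real.sqrt (2 / 3) ∧ d = 1 / Real.sqrt 3) ∨
      (a = 1 / Real.sqrt 3 ∧ c = 1 / Real.sqrt 2 ∧ d = 1 / Real.sqrt 2)) :
    alphaSet α (alphaSet α S₀) =
      circleSet e₁ e₂ c d ∪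
        {x | ∃ mu : ℂ, ‖mu‖ = 1 ∧ x.submodule = Submodule.span ℂ
          {((Real.sqrt (1 - a ^ 2 / (1 - a ^ 2 / c ^ 2)) : ℝ) : ℂ) • e₂ +
            (mu * ((a / Real.sqrt (1 - a ^ 2 / c ^ 2) : ℝ) : ℂ)) • e₃}} ∧
    Disjoint (circleSet e₁ e₂ c d)
      {x : Projectivization ℂ H | ∃ mu : ℂ, ‖mu‖ = 1 ∧ x.submodule = Submodule.span ℂ
        {((Real.sqrt (1 - a ^ 2 / (1 - a ^ 2 / c ^ 2)) : ℝ) : ℂ) • e₂ +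
          (mu * ((a / Real.sqrt (1 - a ^ 2 / c ^ 2) : ℝ) : ℂ)) • e₃}} := by
  subst hS₀ ha
  have he := orthonormal_three he₁ he₂ he₃ he₁₂ he₁₃ he₂₃
  have hα₀ : 0 ≤ α := by linarith [Real.pi_pos]
  have hαπ : α ≤ Real.pi := by linarith [Real.pi_pos]
  have hexc : ExceptionalParams (Real.cos α) c d := hcase
  obtain ⟨ha, hc, hac⟩ := hexc.pos_and_sq_mul_le hd
  obtain ⟨hq, hpq, hacq⟩ := second_circle_radii ha hc hac rfl rfl
  refine ⟨subset_antisymm ?_ (Set.union_subset ?_ ?_),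
    disjoint_circleSet (norm_ne_zero_iff.1 (by simp [he₁])) he₁₂ he₁₃ hc.ne'⟩
  · exact alphaSet_alphaSet_subset_union he hα₀ hαπ hc hd hcd hlam hinj hdim ha
      (Real.sqrt_nonneg _) hq hpq hacq
  · exact circleSet_subset_alphaSet_alphaSet_s15 he hα₀ hαπ hc hd hcd hlam hinj hdim
  · exact circleSet_subset_alphaSet_alphaSet_of_forall he hα₀ hαπ hc hd hcd hlam hinj hdim
      (Real.sqrt_nonneg _) hq hpq hacq fun y z Y Z hyz hy hY hZ =>
        hexc.norm_conj_mul_add_conj_mul_eq hd rfl hpq hyz hy hY hZ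

/-- double-α-set of a collinear triple in dimension three, exceptional cases. -/
theorem double_alphaSet_dim_three_exceptional
    (hdim : Module.rank ℂ H = 3)
    (α : ℝ) (hα₁ : Real.pi / 4 < α) (hα₂ : α < Real.pi / 2)
    (a : ℝ) (ha : a = Real.cos α)
    (c d : ℝ) (hdc : d ≤ c) (hd : 0 < d) (hcd : c ^ 2 + d ^ 2 = 1)
    (lam : Fin 3 → ℂ) (hlam : ∀ j, ‖lam j‖ = 1) (hinj : Function.Injective lam)
    (e₁ e₂ e₃ : H) (he₁ : ‖e₁‖ = 1) (he₂ : ‖e₂‖ = 1) (he₃ : ‖e₃‖ = 1)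
    (he₁₂ : (inner ℂ e₁ e₂ : ℂ) = 0) (he₁₃ : (inner ℂ e₁ e₃ : ℂ) = 0)
    (he₂₃ : (inner ℂ e₂ e₃ : ℂ) = 0)
    (S₀ : Set (Projectivization ℂ H))
    (hS₀ : S₀ = {x | ∃ j : Fin 3,
      x.submodule = Submodule.span ℂ {(c : ℂ) • e₁ + (lam j * d) • e₂}})
    (hcase : (a ≤ c / Real.sqrt (1 + c ^ 2) ∧ d < a) ∨
      (a = 1 / Real.sqrt 3 ∧ c = Real.sqrt (2 / 3) ∧ d = 1 / Real.sqrt 3) ∨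
      (a = 1 / Real.sqrt 3 ∧ c = 1 / Real.sqrt 2 ∧ d = 1 / Real.sqrt 2)) :
    alphaSet α (alphaSet α S₀) =
      circleSet e₁ e₂ c d ∪
        {x | ∃ mu : ℂ, ‖mu‖ = 1 ∧ x.submodule = Submodule.span ℂ
          {((Real.sqrt (1 - a ^ 2 / (1 - a ^ 2 / c ^ 2)) : ℝ) : ℂ) • e₂ +
            (mu * ((a / Real.sqrt (1 - a ^ 2 / c ^ 2) : ℝ) : ℂ)) • e₃}} ∧
    Disjoint (circleSet e₁ e₂ c d)
      {x : Projectivization ℂ H | ∃ mu : ℂ, ‖mu‖ = 1 ∧ x.submodule = Submodule.span ℂ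
        {((Real.sqrt (1 - a ^ 2 / (1 - a ^ 2 / c ^ 2)) : ℝ) : ℂ) • e₂ +
          (mu * ((a / Real.sqrt (1 - a ^ 2 / c ^ 2) : ℝ) : ℂ)) • e₃}} :=
  double_alphaSet_dim_three_exceptional_general hdim α hα₁ hα₂ a ha c d hd hcd lam hlam hinj e₁ e₂
    e₃ he₁ he₂ he₃ he₁₂ he₁₃ he₂₃ S₀ hS₀ hcase
end
end
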